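/- Let d, M be natural numbers with M ≥ 2, let (μ_j)_{j=1}^M be an orthonormal family in ℝ^d, let A ∈ ℝ^{d×d} satisfy A x = 0 for every x orthogonal to all μ_1,…,μ_M, and let P = μ_1 μ_1ᵀ + μ_2 μ_2ᵀ. If ‖A μ_j − P A μ_j‖ ≤ ε for every j ∈ {1,…,M} and ‖P A μ_1‖ ≥ c for some c > 0, then ‖A − P A‖_F ≤ (√M · ε / c) · ‖A‖_F, i.e., the relative Frobenius error of the rank-≤2 approximation P A of A is at most √M ε / c. -/

import Mathlib

open scoped RealInnerProductSpace BigOperators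

/-- The Frobenius norm of a real matrix. -/
noncomputable def frobNorm {d : ℕ} (A : Matrix (Fin d) (Fin d) ℝ) : ℝ :=
  Real.sqrt (∑ i, ∑ j, (A i j) ^ 2)

/-!
Since `A`, hence also `B = A - P A`, vanishes on the orthogonal complement of the `μ j`, every
row of `B` lies in the span of the `μ j`, and Parseval applied row by row gives
`‖B‖_F² = ∑ j, ‖B μ_j‖² ≤ M ε²`. On the other hand `P` is the orthogonal projection onto
`span {μ_1, μ_2}`, so `c ≤ ‖P A μ_1‖ ≤ ‖A μ_1‖ ≤ ‖A‖_F`.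
-/

open WithLp (toLp)

section Orthonormal

variable {E ι : Type*} [NormedAddCommGroup E] [InnerProductSpace ℝ E] {μ : ι → E}

theorem Orthonormal.norm_sq_eq_sum_inner_sq [Fintype ι] (hμ : Orthonormal ℝ μ) {r : E}
    (hr : ∀ x, (∀ k, ⟪μ k, x⟫ = 0) → ⟪r, x⟫ = 0) :
    ‖r‖ ^ 2 = ∑ k, ⟪μ k, r⟫ ^ 2 := by
  set p := ∑ k, ⟪μ k, r⟫ • μ k
  have hp : ∀ k, ⟪μ k, r - p⟫ = 0 := fun k => by
    rw [inner_sub_right, hμ.inner_right_fintype, sub_self]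
  calc ‖r‖ ^ 2 = ⟪r, p⟫ := by
        rw [← real_inner_self_eq_norm_sq, ← sub_eq_zero, ← inner_sub_right, hr _ hp]
    _ = ∑ k, ⟪μ k, r⟫ ^ 2 := by
        simp only [p, inner_sum, real_inner_smul_right, real_inner_comm r, sq]

theorem Orthonormal.norm_sum_inner_smul_le (hμ : Orthonormal ℝ μ) (s : Finset ι) (y : E) :
    ‖∑ k ∈ s, ⟪μ k, y⟫ • μ k‖ ≤ ‖y‖ := by
  have hsq : ‖∑ k ∈ s, ⟪μ k, y⟫ • μ k‖ ^ 2 = ∑ k ∈ s, ⟪μ k, y⟫ ^ 2 := by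
    rw [← real_inner_self_eq_norm_sq, sum_inner]
    exact Finset.sum_congr rfl fun k hk => by
      rw [real_inner_smul_left, hμ.inner_right_sum _ hk, sq]
  have bessel := hμ.sum_inner_products_le (s := s) y
  simp only [Real.norm_eq_abs, sq_abs] at bessel
  exact (pow_le_pow_iff_left₀ (norm_nonneg _) (norm_nonneg _) two_ne_zero).mp (hsq ▸ bessel)

end Orthonormal

namespace Matrix

variable {ι m n : Type*} [Fintype n] [DecidableEq n]

theorem toEuclideanLin_apply_eq_inner_row (A : Matrix m n ℝ) (x : EuclideanSpace ℝ n) (i : m) :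
    toEuclideanLin A x i = ⟪toLp 2 (A i), x⟫ := by
  simp [PiLp.inner_apply, mulVec, dotProduct, mul_comm]

theorem toEuclideanLin_sum_vecMulVec_self (s : Finset ι) (μ : ι → EuclideanSpace ℝ n)
    (y : EuclideanSpace ℝ n) :
    toEuclideanLin (∑ k ∈ s, vecMulVec (μ k) (μ k)) y = ∑ k ∈ s, ⟪μ k, y⟫ • μ k := by
  ext i
  simp [vecMulVec_mulVec, PiLp.inner_apply, dotProduct, mul_comm]

theorem sum_sq_eq_sum_norm_sq_toEuclideanLin [Fintype m] [Fintype ι] (B : Matrix m n ℝ)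
    {μ : ι → EuclideanSpace ℝ n} (hμ : Orthonormal ℝ μ)
    (hB : ∀ x, (∀ k, ⟪μ k, x⟫ = 0) → toEuclideanLin B x = 0) :
    ∑ i, ∑ j, B i j ^ 2 = ∑ k, ‖toEuclideanLin B (μ k)‖ ^ 2 := by
  have hrow (i : m) : ∑ j, B i j ^ 2 = ∑ k, ⟪μ k, toLp 2 (B i)⟫ ^ 2 := by
    refine (EuclideanSpace.real_norm_sq_eq (toLp 2 (B i))).symm.trans
      (hμ.norm_sq_eq_sum_inner_sq fun x hx => ?_)
    rw [← toEuclideanLin_apply_eq_inner_row, hB x hx, PiLp.zero_apply]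
  simp only [hrow, EuclideanSpace.real_norm_sq_eq, toEuclideanLin_apply_eq_inner_row,
    real_inner_comm]
  exact Finset.sum_comm

end Matrix

theorem frobNorm_sq {d : ℕ} (A : Matrix (Fin d) (Fin d) ℝ) :
    frobNorm A ^ 2 = ∑ i, ∑ j, A i j ^ 2 :=
  Real.sq_sqrt (by positivity)

theorem norm_toEuclideanLin_le_frobNorm {d : ℕ} (A : Matrix (Fin d) (Fin d) ℝ)
    (x : EuclideanSpace ℝ (Fin d)) : ‖Matrix.toEuclideanLin A x‖ ≤ frobNorm A * ‖x‖ := by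
  have hsq : ‖Matrix.toEuclideanLin A x‖ ^ 2 ≤ (frobNorm A * ‖x‖) ^ 2 := by
    rw [mul_pow, frobNorm_sq, Finset.sum_mul, EuclideanSpace.real_norm_sq_eq]
    refine Finset.sum_le_sum fun i _ => ?_
    have hrow : ‖toLp 2 (A i)‖ ^ 2 = ∑ j, A i j ^ 2 :=
      EuclideanSpace.real_norm_sq_eq (toLp 2 (A i))
    rw [Matrix.toEuclideanLin_apply_eq_inner_row, ← hrow, ← mul_pow]
    exact sq_le_sq.mpr ((abs_real_inner_le_norm _ _).trans (le_abs_self _))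
  exact (pow_le_pow_iff_left₀ (norm_nonneg _)
    (mul_nonneg (Real.sqrt_nonneg _) (norm_nonneg _)) two_ne_zero).mp hsq

theorem frobNorm_le_sqrt_card_mul_of_orthonormal {d : ℕ} {ι : Type*} [Fintype ι]
    {μ : ι → EuclideanSpace ℝ (Fin d)} (hμ : Orthonormal ℝ μ) {B : Matrix (Fin d) (Fin d) ℝ}
    (hB : ∀ x, (∀ k, ⟪μ k, x⟫ = 0) → Matrix.toEuclideanLin B x = 0) {ε : ℝ} (hε : 0 ≤ ε)
    (hBμ : ∀ k, ‖Matrix.toEuclideanLin B (μ k)‖ ≤ ε) :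
    frobNorm B ≤ √(Fintype.card ι) * ε := by
  rw [frobNorm, B.sum_sq_eq_sum_norm_sq_toEuclideanLin hμ hB, ← Real.sqrt_sq hε,
    ← Real.sqrt_mul (by positivity)]
  refine Real.sqrt_le_sqrt ?_
  calc ∑ k, ‖Matrix.toEuclideanLin B (μ k)‖ ^ 2 ≤ ∑ _k : ι, ε ^ 2 :=
        Finset.sum_le_sum fun k _ => pow_le_pow_left₀ (norm_nonneg _) (hBμ k) 2
    _ = Fintype.card ι * ε ^ 2 := by simp

/-- If a matrix `A` vanishes on the orthogonal complement of an orthonormal family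
`μ_1, …, μ_M`, maps each `μ_j` to within `ε` of the span of `μ_1, μ_2`
(with orthogonal projection `P = μ_1 μ_1ᵀ + μ_2 μ_2ᵀ`), and `‖P A μ_1‖ ≥ c > 0`,
then the relative Frobenius error of the rank-≤2 approximation `P * A` of `A`
is at most `√M · ε / c`. -/
theorem stmt_1 (d M : ℕ) (hM : 2 ≤ M)
    (μ : Fin M → EuclideanSpace ℝ (Fin d)) (hμ : Orthonormal ℝ μ)
    (A : Matrix (Fin d) (Fin d) ℝ)
    (hA : ∀ x : EuclideanSpace ℝ (Fin d),
      (∀ j : Fin M, ⟪μ j, x⟫ = 0) → Matrix.toEuclideanLin A x = 0)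
    (P : Matrix (Fin d) (Fin d) ℝ)
    (hP : P = Matrix.vecMulVec (μ ⟨0, by omega⟩) (μ ⟨0, by omega⟩)
            + Matrix.vecMulVec (μ ⟨1, by omega⟩) (μ ⟨1, by omega⟩))
    (ε c : ℝ) (hc : 0 < c)
    (hε : ∀ j : Fin M,
      ‖Matrix.toEuclideanLin A (μ j) - Matrix.toEuclideanLin (P * A) (μ j)‖ ≤ ε)
    (hlarge : c ≤ ‖Matrix.toEuclideanLin (P * A) (μ ⟨0, by omega⟩)‖) :
    frobNorm (A - P * A) ≤ (Real.sqrt M * ε / c) * frobNorm A := by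
  set i₀ : Fin M := ⟨0, by omega⟩
  set i₁ : Fin M := ⟨1, by omega⟩
  have hP_sum : P = ∑ k ∈ {i₀, i₁}, Matrix.vecMulVec (μ k) (μ k) := by
    rw [Finset.sum_pair (by simp [i₀, i₁, Fin.ext_iff]), hP]
  have hε₀ : 0 ≤ ε := (norm_nonneg _).trans (hε i₀)
  have hB : ∀ x, (∀ k, ⟪μ k, x⟫ = 0) → Matrix.toEuclideanLin (A - P * A) x = 0 := by
    intro x hx
    simp [hA x hx]
  have hBμ : ∀ k, ‖Matrix.toEuclideanLin (A - P * A) (μ k)‖ ≤ ε := by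
    simpa [map_sub] using hε
  have hcA : c ≤ frobNorm A := calc
    c ≤ ‖Matrix.toEuclideanLin (P * A) (μ i₀)‖ := hlarge
    _ ≤ ‖Matrix.toEuclideanLin A (μ i₀)‖ := by
      rw [Matrix.toLpLin_mul_same, LinearMap.comp_apply, hP_sum,
        Matrix.toEuclideanLin_sum_vecMulVec_self]
      exact hμ.norm_sum_inner_smul_le _ _
    _ ≤ frobNorm A * ‖μ i₀‖ := norm_toEuclideanLin_le_frobNorm A (μ i₀)
    _ = frobNorm A := by rw [hμ.1 i₀, mul_one]
  calc frobNorm (A - P * A) ≤ √M * ε := by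
        simpa using frobNorm_le_sqrt_card_mul_of_orthonormal hμ hB hε₀ hBμ
    _ = (√M * ε / c) * c := by field_simp
    _ ≤ (√M * ε / c) * frobNorm A := by gcongr
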